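/- arXiv:2211.10400 — 13 statements merged into one kernel-verified Lean document; each statement's English description precedes it below -/
import Mathlib

section
/- Every locally strongly sober topological space is weakly Hausdorff. -/
/-- The specialization preorder: `x ≤ y` iff every open neighborhood of `x` contains `y`. -/
def SpecLE {X : Type*} [TopologicalSpace X] (x y : X) : Prop :=
  ∀ U : Set X, IsOpen U → x ∈ U → y ∈ U

/-- `↑x`, the upward closure of the point `x` in the specialization preorder. -/
def UpSet {X : Type*} [TopologicalSpace X] (x : X) : Set X :=
  {z | SpecLE x z}

/-- `↑A`, the upward closure of the set `A` in the specialization preorder. -/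
def UpClo {X : Type*} [TopologicalSpace X] (A : Set X) : Set X :=
  {z | ∃ a ∈ A, SpecLE a z}

/-- `↓A`, the downward closure of the set `A` in the specialization preorder. -/
def DownClo {X : Type*} [TopologicalSpace X] (A : Set X) : Set X :=
  {z | ∃ a ∈ A, SpecLE z a}

/-- A space is weakly Hausdorff (Keimel-Lawson) iff every open neighborhood `W` of
`↑x ∩ ↑y` contains `U ∩ V` for some open neighborhoods `U` of `x` and `V` of `y`. -/
def WeaklyHausdorff (X : Type*) [TopologicalSpace X] : Prop :=
  ∀ x y : X, ∀ W : Set X, IsOpen W → UpSet x ∩ UpSet y ⊆ W →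
    ∃ U V : Set X, IsOpen U ∧ x ∈ U ∧ IsOpen V ∧ y ∈ V ∧ U ∩ V ⊆ W

/-- The set of limits of a filter: points all of whose open neighborhoods belong to it. -/
def limSet {X : Type*} [TopologicalSpace X] (F : Filter X) : Set X :=
  {x | ∀ U : Set X, IsOpen U → x ∈ U → U ∈ F}

/-- Locally strongly sober: limits of each ultrafilter form the empty set or the closure
of a unique point. -/
def LocallyStronglySober (X : Type*) [TopologicalSpace X] : Prop :=
  ∀ 𝒰 : Ultrafilter X, limSet (𝒰 : Filter X) = ∅ ∨ ∃! x : X, limSet (𝒰 : Filter X) = closure {x}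

/-- Saturated subset: intersection of its open neighborhoods. -/
def IsSaturated {X : Type*} [TopologicalSpace X] (A : Set X) : Prop :=
  A = ⋂₀ {U : Set X | IsOpen U ∧ A ⊆ U}

/-- Coherent space: intersections of compact saturated subsets are compact. -/
def Coherent (X : Type*) [TopologicalSpace X] : Prop :=
  ∀ Q₁ Q₂ : Set X, IsCompact Q₁ → IsSaturated Q₁ → IsCompact Q₂ → IsSaturated Q₂ →
    IsCompact (Q₁ ∩ Q₂)

/-- Weakly coherent space: `↑x ∩ ↑y` is compact for all points `x`, `y`. -/
def WeaklyCoherent (X : Type*) [TopologicalSpace X] : Prop :=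
  ∀ x y : X, IsCompact (UpSet x ∩ UpSet y)

/-- Sober space: every irreducible closed subset is the closure of a unique point. -/
def Sober (X : Type*) [TopologicalSpace X] : Prop :=
  ∀ C : Set X, IsClosed C → IsIrreducible C → ∃! x : X, C = closure {x}

/-- `z` is a supremum of `D` with respect to the specialization preorder. -/
def IsSupOf {X : Type*} [TopologicalSpace X] (D : Set X) (z : X) : Prop :=
  (∀ d ∈ D, SpecLE d z) ∧ ∀ y : X, (∀ d ∈ D, SpecLE d y) → SpecLE z y

/-- `D` is (nonempty and) directed with respect to the specialization preorder. -/
def DirectedSubset {X : Type*} [TopologicalSpace X] (D : Set X) : Prop :=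
  D.Nonempty ∧ DirectedOn SpecLE D

/-- Monotone convergence space: a T0 space where every directed subset has a supremum for the
specialization ordering, and every open set is Scott-open. -/
def MonotoneConvergenceSpace (X : Type*) [TopologicalSpace X] : Prop :=
  T0Space X ∧ (∀ D : Set X, DirectedSubset D → ∃ z : X, IsSupOf D z) ∧
    ∀ U : Set X, IsOpen U → ∀ D : Set X, ∀ z : X,
      DirectedSubset D → IsSupOf D z → z ∈ U → ∃ d ∈ D, d ∈ U

/-- A filter on a complete lattice: nonempty, upward closed, downward directed. -/
def IsLatFilter {L : Type*} [CompleteLattice L] (F : Set L) : Prop :=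
  F.Nonempty ∧ (∀ u ∈ F, ∀ v : L, u ≤ v → v ∈ F) ∧
    ∀ u ∈ F, ∀ v ∈ F, ∃ w ∈ F, w ≤ u ∧ w ≤ v

/-- A Scott-open filter on a complete lattice. -/
def ScottOpenFilter {L : Type*} [CompleteLattice L] (F : Set L) : Prop :=
  IsLatFilter F ∧
    ∀ D : Set L, D.Nonempty → DirectedOn (· ≤ ·) D → sSup D ∈ F → ∃ d ∈ D, d ∈ F

/-- The join of two filters on a complete lattice: `{u ⊓ v | u ∈ F, v ∈ G}`. -/
def FilterJoin {L : Type*} [CompleteLattice L] (F G : Set L) : Set L :=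
  {w | ∃ u ∈ F, ∃ v ∈ G, w = u ⊓ v}

/-- Locally temperate: the join of any two Scott-open filters is a Scott-open filter. -/
def LocallyTemperate (L : Type*) [CompleteLattice L] : Prop :=
  ∀ F G : Set L, ScottOpenFilter F → ScottOpenFilter G → ScottOpenFilter (FilterJoin F G)

/-- `u` is way below `v`: every directed set with supremum above `v` contains an element above `u`. -/
def WayBelowL {L : Type*} [CompleteLattice L] (u v : L) : Prop :=
  ∀ D : Set L, D.Nonempty → DirectedOn (· ≤ ·) D → v ≤ sSup D → ∃ d ∈ D, u ≤ d

/-- Continuous lattice: every element is the supremum of a directed family of elements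
way below it. -/
def ContinuousLat (L : Type*) [CompleteLattice L] : Prop :=
  ∀ v : L, ∃ D : Set L, D.Nonempty ∧ DirectedOn (· ≤ ·) D ∧ (∀ d ∈ D, WayBelowL d v) ∧ v = sSup D

/-- Stable frame: `u ≪ v` and `u ≪ w` imply `u ≪ v ⊓ w`. -/
def StableLat (L : Type*) [CompleteLattice L] : Prop :=
  ∀ u v w : L, WayBelowL u v → WayBelowL u w → WayBelowL u (v ⊓ w)

/-- Core-compact space: the frame of open subsets is a continuous lattice. -/
def CoreCompact (X : Type*) [TopologicalSpace X] : Prop :=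
  ContinuousLat (TopologicalSpace.Opens X)

/-- A lens: a nonempty set of the form `Q ∩ C` with `Q` compact saturated and `C` closed. -/
def IsLens {X : Type*} [TopologicalSpace X] (L : Set X) : Prop :=
  L.Nonempty ∧ ∃ Q C : Set X, IsCompact Q ∧ IsSaturated Q ∧ IsClosed C ∧ L = Q ∩ C

/-- A quasi-lens: a pair `(Q, C)`, `Q` compact saturated, `C` closed, `Q` meets `C`,
`Q ⊆ ↑(Q ∩ C)`, and `C ⊆ cl (U ∩ C)` for every open neighborhood `U` of `Q`. -/
def IsQuasiLens {X : Type*} [TopologicalSpace X] (Q C : Set X) : Prop :=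
  IsCompact Q ∧ IsSaturated Q ∧ IsClosed C ∧ (Q ∩ C).Nonempty ∧
    Q ⊆ UpClo (Q ∩ C) ∧ ∀ U : Set X, IsOpen U → Q ⊆ U → C ⊆ closure (U ∩ C)

theorem lss_implies_weaklyHausdorff {X : Type*} [TopologicalSpace X]
    (h : LocallyStronglySober X) : WeaklyHausdorff X := by
  intro x y W hW hsub
  by_contra hcon
  push_neg at hcon
  -- the filter 𝓝 x ⊓ 𝓝 y ⊓ 𝓟 Wᶜ is proper
  have hne : ((nhds x ⊓ nhds y) ⊓ Filter.principal Wᶜ).NeBot := by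
    rw [Filter.inf_principal_neBot_iff]
    intro U hU
    rw [Filter.mem_inf_iff] at hU
    obtain ⟨A, hA, B, hB, rfl⟩ := hU
    obtain ⟨A', hA'sub, hA'open, hxA'⟩ := mem_nhds_iff.mp hA
    obtain ⟨B', hB'sub, hB'open, hyB'⟩ := mem_nhds_iff.mp hB
    have := hcon A' B' hA'open hxA' hB'open hyB'
    rw [Set.not_subset] at this
    obtain ⟨z, hz, hznW⟩ := this
    exact ⟨z, ⟨hA'sub hz.1, hB'sub hz.2⟩, hznW⟩
  set F := (nhds x ⊓ nhds y) ⊓ Filter.principal Wᶜ with hF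
  let 𝒰 := Ultrafilter.of F
  have h𝒰F : (𝒰 : Filter X) ≤ F := Ultrafilter.of_le F
  have hxlim : x ∈ limSet (𝒰 : Filter X) := by
    intro U hU hxU
    exact (h𝒰F.trans (inf_le_left.trans inf_le_left)) (hU.mem_nhds hxU)
  have hylim : y ∈ limSet (𝒰 : Filter X) := by
    intro U hU hyU
    exact (h𝒰F.trans (inf_le_left.trans inf_le_right)) (hU.mem_nhds hyU)
  rcases h 𝒰 with hemp | ⟨z, hz, _⟩
  · rw [hemp] at hxlim; exact hxlim
  · have hxcl : x ∈ closure ({z} : Set X) := hz ▸ hxlim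
    have hycl : y ∈ closure ({z} : Set X) := hz ▸ hylim
    have hxz : SpecLE x z := by
      intro U hU hxU
      obtain ⟨w, hwU, hwz⟩ := mem_closure_iff.mp hxcl U hU hxU
      rwa [Set.mem_singleton_iff.mp hwz] at hwU
    have hyz : SpecLE y z := by
      intro U hU hyU
      obtain ⟨w, hwU, hwz⟩ := mem_closure_iff.mp hycl U hU hyU
      rwa [Set.mem_singleton_iff.mp hwz] at hwU
    have hzW : z ∈ W := hsub ⟨hxz, hyz⟩
    have hzlim : z ∈ limSet (𝒰 : Filter X) := by
      rw [hz]; exact subset_closure rfl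
    have hWmem : W ∈ (𝒰 : Filter X) := hzlim W hW hzW
    have hWc : Wᶜ ∈ (𝒰 : Filter X) := (h𝒰F.trans inf_le_right) (Filter.mem_principal_self Wᶜ)
    have : (∅ : Set X) ∈ (𝒰 : Filter X) := by
      have := Filter.inter_mem hWmem hWc
      rwa [Set.inter_compl_self] at this
    exact (Ultrafilter.neBot 𝒰).ne (Filter.empty_mem_iff_bot.mp this)
end

section
/- Every weakly Hausdorff, weakly coherent, monotone convergence space is locally strongly sober. -/
theorem weaklyHausdorff_weaklyCoherent_monConv_implies_lss {X : Type*} [TopologicalSpace X]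
    (hwh : WeaklyHausdorff X) (hwc : WeaklyCoherent X) (hmc : MonotoneConvergenceSpace X) :
    LocallyStronglySober X := by
  obtain ⟨ht0, hsup, hscott⟩ := hmc
  haveI := ht0
  intro 𝒰
  by_cases hne : (limSet (𝒰 : Filter X)).Nonempty
  · right
    set L := limSet (𝒰 : Filter X) with hLdef
    have hdir : DirectedSubset L := by
      refine ⟨hne, ?_⟩
      intro x hx y hy
      by_contra h
      push_neg at h
      set K := UpSet x ∩ UpSet y with hKdef
      have hK : IsCompact K := hwc x y
      have hchoice : ∀ k : K, ∃ U : Set X, IsOpen U ∧ (k : X) ∈ U ∧ U ∉ (𝒰 : Filter X) := by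
        rintro ⟨k, hk1, hk2⟩
        by_contra hc
        push_neg at hc
        have hkL : k ∈ L := fun U hU hkU => hc U hU hkU
        exact h k hkL hk1 hk2
      choose U hUo hUm hUn using hchoice
      have hcover : K ⊆ ⋃ i : K, U i := fun k hk => Set.mem_iUnion.2 ⟨⟨k, hk⟩, hUm ⟨k, hk⟩⟩
      obtain ⟨t, ht⟩ := hK.elim_finite_subcover U hUo hcover
      set W := ⋃ i ∈ t, U i with hW
      have hWo : IsOpen W := isOpen_biUnion fun i _ => hUo i
      have hWc : Wᶜ ∈ (𝒰 : Filter X) := by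
        have h1 : ∀ i ∈ t, (U i)ᶜ ∈ (𝒰 : Filter X) := fun i _ =>
          Ultrafilter.compl_mem_iff_notMem.2 (hUn i)
        have h2 : (⋂ i ∈ t, (U i)ᶜ) ∈ (𝒰 : Filter X) := (Filter.biInter_finset_mem t).2 h1
        simpa [hW, Set.compl_iUnion] using h2
      obtain ⟨Ux, Vy, hUxo, hxU, hVyo, hyV, hsub⟩ := hwh x y W hWo ht
      have hWmem : W ∈ (𝒰 : Filter X) :=
        Filter.mem_of_superset (Filter.inter_mem (hx Ux hUxo hxU) (hy Vy hVyo hyV)) hsub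
      exact Ultrafilter.compl_mem_iff_notMem.1 hWc hWmem
    obtain ⟨z, hz⟩ := hsup L hdir
    have hzL : z ∈ L := by
      intro U hU hzU
      obtain ⟨d, hdL, hdU⟩ := hscott U hU L z hdir hz hzU
      exact hdL U hU hdU
    have hLc : L = closure {z} := by
      ext y
      rw [mem_closure_iff]
      constructor
      · intro hyL o ho hyo
        exact ⟨z, hz.1 y hyL o ho hyo, rfl⟩
      · intro hy V hV hyV
        obtain ⟨w, hwV, hwz⟩ := hy V hV hyV
        rcases hwz with rfl
        exact hzL V hV hwV
    refine ⟨z, hLc, ?_⟩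
    intro y hy
    have hcc : closure ({y} : Set X) = closure {z} := hy.symm.trans hLc
    exact (inseparable_iff_closure_eq.2 hcc).eq
  · left
    exact Set.not_nonempty_iff_eq_empty.1 hne
end

section
/- Every weakly Hausdorff monotone convergence space is sober. -/
theorem weaklyHausdorff_monConv_implies_sober {X : Type*} [TopologicalSpace X]
    (hwh : WeaklyHausdorff X) (hmc : MonotoneConvergenceSpace X) : Sober X := by
  obtain ⟨ht0, hsup, hscott⟩ := hmc
  intro C hCcl hCirr
  -- C is directed under specialization
  have hdir : DirectedSubset C := by
    refine ⟨hCirr.nonempty, ?_⟩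
    intro x hx y hy
    by_contra hcon
    push_neg at hcon
    have hsub : UpSet x ∩ UpSet y ⊆ Cᶜ := by
      intro z ⟨hzx, hzy⟩ hzC
      exact hcon z hzC hzx hzy
    obtain ⟨U, V, hU, hxU, hV, hyV, hUV⟩ := hwh x y Cᶜ hCcl.isOpen_compl hsub
    obtain ⟨w, hwC, hwU, hwV⟩ := hCirr.2 U V hU hV ⟨x, hx, hxU⟩ ⟨y, hy, hyV⟩
    exact hUV ⟨hwU, hwV⟩ hwC
  obtain ⟨z, hzub, hzlub⟩ := hsup C hdir
  -- z ∈ C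
  have hzC : z ∈ C := by
    by_contra hzC
    obtain ⟨d, hdC, hd⟩ := hscott Cᶜ hCcl.isOpen_compl C z hdir ⟨hzub, hzlub⟩ hzC
    exact hd hdC
  have hCz : C = closure ({z} : Set X) := by
    apply Set.Subset.antisymm
    · intro d hd
      rw [mem_closure_iff]
      intro U hU hdU
      exact ⟨z, hzub d hd U hU hdU, rfl⟩
    · exact closure_minimal (Set.singleton_subset_iff.mpr hzC) hCcl
  refine ⟨z, hCz, ?_⟩
  intro y hy
  exact (inseparable_iff_closure_eq.mpr (hy.symm.trans hCz)).eq
end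

section
/- Every weakly Hausdorff, weakly coherent topological space is coherent: the intersection of any two compact saturated subsets is compact. -/
lemma sat_upward {X : Type*} [TopologicalSpace X] {Q : Set X} (hQ : IsSaturated Q)
    {x z : X} (hx : x ∈ Q) (h : SpecLE x z) : z ∈ Q := by
  rw [hQ]
  intro S hS
  exact h S hS.1 (hS.2 hx)

theorem weaklyHausdorff_weaklyCoherent_implies_coherent {X : Type*} [TopologicalSpace X]
    (hwh : WeaklyHausdorff X) (hwc : WeaklyCoherent X) : Coherent X := by
  intro Q₁ Q₂ h1 hs1 h2 hs2
  classical
  refine isCompact_of_finite_subcover fun {ι} U hU hcov => ?_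
  have key : ∀ x ∈ Q₁, ∀ y ∈ Q₂, ∃ (t : Finset ι) (A B : Set X),
      IsOpen A ∧ x ∈ A ∧ IsOpen B ∧ y ∈ B ∧ A ∩ B ⊆ ⋃ i ∈ t, U i := by
    intro x hx y hy
    have hsub : UpSet x ∩ UpSet y ⊆ ⋃ i, U i := fun z hz =>
      hcov ⟨sat_upward hs1 hx hz.1, sat_upward hs2 hy hz.2⟩
    obtain ⟨t, ht⟩ := (hwc x y).elim_finite_subcover U hU hsub
    obtain ⟨A, B, hAo, hxA, hBo, hyB, hAB⟩ :=
      hwh x y (⋃ i ∈ t, U i) (isOpen_biUnion fun i _ => hU i) ht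
    exact ⟨t, A, B, hAo, hxA, hBo, hyB, hAB⟩
  choose t A B hAo hxA hBo hyB hAB using key
  have key2 : ∀ y ∈ Q₂, ∃ (V : Set X) (F : Finset ι),
      IsOpen V ∧ y ∈ V ∧ Q₁ ∩ V ⊆ ⋃ i ∈ F, U i := by
    intro y hy
    obtain ⟨s, hs⟩ := h1.elim_finite_subcover (fun p : Q₁ => A p.1 p.2 y hy)
      (fun p => hAo p.1 p.2 y hy)
      (fun z hz => Set.mem_iUnion.2 ⟨⟨z, hz⟩, hxA z hz y hy⟩)
    refine ⟨⋂ p ∈ s, B p.1 p.2 y hy, s.biUnion (fun p => t p.1 p.2 y hy),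
      isOpen_biInter_finset (fun p _ => hBo p.1 p.2 y hy),
      Set.mem_iInter₂.2 (fun p _ => hyB p.1 p.2 y hy), ?_⟩
    rintro z ⟨hz1, hz2⟩
    obtain ⟨p, hps, hzA⟩ := Set.mem_iUnion₂.1 (hs hz1)
    have hzB := Set.mem_iInter₂.1 hz2 p hps
    obtain ⟨i, hit, hzi⟩ := Set.mem_iUnion₂.1 (hAB p.1 p.2 y hy ⟨hzA, hzB⟩)
    exact Set.mem_iUnion₂.2 ⟨i, Finset.mem_biUnion.2 ⟨p, hps, hit⟩, hzi⟩
  choose V F hVo hyV hQV using key2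
  obtain ⟨s₂, hs₂⟩ := h2.elim_finite_subcover (fun q : Q₂ => V q.1 q.2)
    (fun q => hVo q.1 q.2)
    (fun z hz => Set.mem_iUnion.2 ⟨⟨z, hz⟩, hyV z hz⟩)
  refine ⟨s₂.biUnion (fun q => F q.1 q.2), ?_⟩
  rintro z ⟨hz1, hz2⟩
  obtain ⟨q, hqs, hzV⟩ := Set.mem_iUnion₂.1 (hs₂ hz2)
  obtain ⟨i, hiF, hzi⟩ := Set.mem_iUnion₂.1 (hQV q.1 q.2 ⟨hz1, hzV⟩)
  exact Set.mem_iUnion₂.2 ⟨i, Finset.mem_biUnion.2 ⟨q, hqs, hiF⟩, hzi⟩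
end

section
/- A topological space X is weakly Hausdorff if and only if for every pair of compact saturated subsets Q1 and Q2 of X and every open set W containing Q1 ∩ Q2, there exist an open set U containing Q1 and an open set V containing Q2 with U ∩ V ⊆ W. -/
theorem weaklyHausdorff_iff_compact_saturated (X : Type*) [TopologicalSpace X] :
    WeaklyHausdorff X ↔
      ∀ Q₁ Q₂ : Set X, IsCompact Q₁ → IsSaturated Q₁ → IsCompact Q₂ → IsSaturated Q₂ →
        ∀ W : Set X, IsOpen W → Q₁ ∩ Q₂ ⊆ W →
          ∃ U V : Set X, IsOpen U ∧ Q₁ ⊆ U ∧ IsOpen V ∧ Q₂ ⊆ V ∧ U ∩ V ⊆ W := by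
  constructor
  · intro h Q₁ Q₂ hQ₁c hQ₁s hQ₂c hQ₂s W hW hsub
    have upQ : ∀ (Q : Set X), IsSaturated Q → ∀ x ∈ Q, UpSet x ⊆ Q := by
      intro Q hQ x hx z hz
      rw [hQ]
      refine Set.mem_sInter.2 ?_
      rintro U ⟨hUo, hQU⟩
      exact hz U hUo (hQU hx)
    have key : ∀ (x : Q₁) (y : Q₂), ∃ U V : Set X,
        IsOpen U ∧ x.1 ∈ U ∧ IsOpen V ∧ y.1 ∈ V ∧ U ∩ V ⊆ W := by
      intro x y
      exact h x.1 y.1 W hW fun z hz =>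
        hsub ⟨upQ Q₁ hQ₁s x.1 x.2 hz.1, upQ Q₂ hQ₂s y.1 y.2 hz.2⟩
    choose U V hUo hxU hVo hyV hUV using key
    have step : ∀ y : Q₂, ∃ Uy Vy : Set X,
        IsOpen Uy ∧ Q₁ ⊆ Uy ∧ IsOpen Vy ∧ y.1 ∈ Vy ∧ Uy ∩ Vy ⊆ W := by
      intro y
      obtain ⟨t, ht⟩ := hQ₁c.elim_finite_subcover (fun x : Q₁ => U x y)
        (fun x => hUo x y)
        (fun z hz => Set.mem_iUnion.2 ⟨⟨z, hz⟩, hxU ⟨z, hz⟩ y⟩)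
      refine ⟨⋃ i ∈ t, U i y, ⋂ i ∈ t, V i y, ?_, ht, ?_, ?_, ?_⟩
      · exact isOpen_biUnion fun i _ => hUo i y
      · exact isOpen_biInter_finset fun i _ => hVo i y
      · exact Set.mem_iInter₂.2 fun i _ => hyV i y
      · rintro z ⟨hzU, hzV⟩
        obtain ⟨i, hi, hz⟩ := Set.mem_iUnion₂.1 hzU
        exact hUV i y ⟨hz, Set.mem_iInter₂.1 hzV i hi⟩
    choose Uy Vy hUyo hQ₁Uy hVyo hyVy hUVy using step
    obtain ⟨s, hs⟩ := hQ₂c.elim_finite_subcover Vy hVyo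
      (fun z hz => Set.mem_iUnion.2 ⟨⟨z, hz⟩, hyVy ⟨z, hz⟩⟩)
    refine ⟨⋂ y ∈ s, Uy y, ⋃ y ∈ s, Vy y, ?_, ?_, ?_, hs, ?_⟩
    · exact isOpen_biInter_finset fun y _ => hUyo y
    · exact fun z hz => Set.mem_iInter₂.2 fun y _ => hQ₁Uy y hz
    · exact isOpen_biUnion fun y _ => hVyo y
    · rintro z ⟨hzU, hzV⟩
      obtain ⟨y, hy, hz⟩ := Set.mem_iUnion₂.1 hzV
      exact hUVy y ⟨Set.mem_iInter₂.1 hzU y hy, hz⟩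
  · intro h x y W hW hsub
    have hxx : ∀ x : X, x ∈ UpSet x := fun x U _ hx => hx
    have hcomp : ∀ x : X, IsCompact (UpSet x) := by
      intro x
      refine isCompact_of_finite_subcover ?_
      intro ι f hf hcov
      obtain ⟨i, hi⟩ := Set.mem_iUnion.1 (hcov (hxx x))
      exact ⟨{i}, fun z hz => Set.mem_iUnion₂.2 ⟨i, Finset.mem_singleton_self i,
        hz (f i) (hf i) hi⟩⟩
    have hsat : ∀ x : X, IsSaturated (UpSet x) := by
      intro x
      apply Set.Subset.antisymm
      · intro z hz
        refine Set.mem_sInter.2 ?_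
        rintro U ⟨hUo, hU⟩
        exact hU hz
      · intro z hz U hUo hxU
        exact Set.mem_sInter.1 hz U ⟨hUo, fun w hw => hw U hUo hxU⟩
    obtain ⟨U, V, hUo, hU, hVo, hV, hUV⟩ :=
      h (UpSet x) (UpSet y) (hcomp x) (hsat x) (hcomp y) (hsat y) W hW hsub
    exact ⟨U, V, hUo, hU (hxx x), hVo, hV (hxx y), hUV⟩
end

section
/- For a sober topological space X, the frame of open subsets of X is locally temperate if and only if X is weakly Hausdorff and coherent. -/
/-!
In a sober space the Hofmann–Mislove theorem identifies the Scott-open filters of opens with the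
neighbourhood filters of compact saturated sets `Q`, and the neighbourhood filter of a set is
Scott-open exactly when the set is compact. The join of the neighbourhood filters of `Q₁` and
`Q₂` is always contained in the neighbourhood filter of `Q₁ ∩ Q₂`, with the same intersection.
Weak Hausdorffness, extended from points to compact saturated sets by the tube lemma, is what
makes the two filters equal; given that, the join is Scott-open iff `Q₁ ∩ Q₂` is compact.
Conversely, if the join is Scott-open it is the neighbourhood filter of its intersection
`Q₁ ∩ Q₂`, which is therefore compact, and for `Q₁ = ↑x`, `Q₂ = ↑y` this is weak Hausdorffness.
-/

open TopologicalSpace Set Topology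

section Lattice

variable {L : Type*} [CompleteLattice L] {F : Set L}

lemma IsLatFilter.top_mem (hF : IsLatFilter F) : ⊤ ∈ F :=
  let ⟨u, hu⟩ := hF.1
  hF.2.1 u hu ⊤ le_top

lemma IsLatFilter.inf_mem (hF : IsLatFilter F) {u v : L} (hu : u ∈ F) (hv : v ∈ F) :
    u ⊓ v ∈ F :=
  let ⟨w, hw, hwu, hwv⟩ := hF.2.2 u hu v hv
  hF.2.1 w hw _ (le_inf hwu hwv)

lemma ScottOpenFilter.exists_maximal_notMem (hF : ScottOpenFilter F) {u : L} (hu : u ∉ F) :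
    ∃ m, u ≤ m ∧ m ∉ F ∧ ∀ v, m < v → v ∈ F := by
  obtain ⟨m, hum, hmF, hmax⟩ := zorn_le_nonempty₀ {v | v ∉ F} (fun c hcF hc v hv => by
    refine ⟨sSup c, fun hc_mem => ?_, fun _ => le_sSup⟩
    obtain ⟨d, hd, hdF⟩ := hF.2 c ⟨v, hv⟩ hc.directedOn hc_mem
    exact hcF hd hdF) u hu
  exact ⟨m, hum, hmF, fun v hmv => by_contra fun hvF => (hmv.trans_le (hmax hvF hmv.le)).false⟩

end Lattice

section Topological

variable {X : Type*} [TopologicalSpace X]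

lemma specLE_iff_specializes {x y : X} : SpecLE x y ↔ y ⤳ x :=
  specializes_iff_forall_open.symm

lemma upSet_eq_nhdsKer_singleton (x : X) : UpSet x = nhdsKer {x} := by
  ext y
  simp [UpSet, specLE_iff_specializes]

lemma isSaturated_iff_nhdsKer_eq {A : Set X} : IsSaturated A ↔ nhdsKer A = A := by
  rw [IsSaturated, nhdsKer_def, eq_comm]

lemma IsSaturated.upSet_subset {A : Set X} (hA : IsSaturated A) {x : X} (hx : x ∈ A) :
    UpSet x ⊆ A := by
  rw [upSet_eq_nhdsKer_singleton, ← isSaturated_iff_nhdsKer_eq.1 hA]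
  exact nhdsKer_mono (singleton_subset_iff.2 hx)

def nhdsOpens (K : Set X) : Set (Opens X) :=
  {U | K ⊆ U}

/-- For a Scott-open filter in a sober space, this is the compact saturated set of the
Hofmann–Mislove theorem. -/
def kerOpens (F : Set (Opens X)) : Set X :=
  ⋂ U ∈ F, (U : Set X)

lemma kerOpens_nhdsOpens (K : Set X) : kerOpens (nhdsOpens K) = nhdsKer K := by
  ext x
  simp only [kerOpens, nhdsOpens, mem_iInter, mem_nhdsKer, mem_ofPred_eq]
  exact ⟨fun h U hU hKU => h ⟨U, hU⟩ hKU, fun h U hKU => h U U.2 hKU⟩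

lemma isSaturated_kerOpens (F : Set (Opens X)) : IsSaturated (kerOpens F) :=
  isSaturated_iff_nhdsKer_eq.2 <| subset_nhdsKer.antisymm' <|
    subset_iInter₂ fun U hU => nhdsKer_minimal (biInter_subset_of_mem hU) U.2

lemma kerOpens_filterJoin {F G : Set (Opens X)} (hF : ⊤ ∈ F) (hG : ⊤ ∈ G) :
    kerOpens (FilterJoin F G) = kerOpens F ∩ kerOpens G := by
  ext x
  simp only [kerOpens, FilterJoin, mem_inter_iff, mem_iInter, mem_ofPred_eq]
  refine ⟨fun h => ⟨fun u hu => ?_, fun v hv => ?_⟩, ?_⟩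
  · exact (h (u ⊓ ⊤) ⟨u, hu, ⊤, hG, rfl⟩).1
  · exact (h (⊤ ⊓ v) ⟨⊤, hF, v, hv, rfl⟩).2
  · rintro ⟨hxF, hxG⟩ _ ⟨u, hu, v, hv, rfl⟩
    exact ⟨hxF u hu, hxG v hv⟩

lemma scottOpenFilter_nhdsOpens_iff {K : Set X} :
    ScottOpenFilter (nhdsOpens K) ↔ IsCompact K := by
  refine ⟨fun hK => isCompact_of_finite_subcover fun {ι} U hU hKU => ?_, fun hK => ?_⟩
  · classical
    let V : Finset ι → Opens X := fun t => ⨆ i ∈ t, ⟨U i, hU i⟩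
    have hV : Monotone V := fun s t hst => biSup_mono fun i hi => hst hi
    have hK_sup : K ⊆ (sSup (range V) : Opens X) := fun x hx => by
      obtain ⟨i, hi⟩ := mem_iUnion.1 (hKU hx)
      exact Opens.mem_sSup.2 ⟨V {i}, mem_range_self _, by simpa [V] using hi⟩
    obtain ⟨_, ⟨t, rfl⟩, ht⟩ :=
      hK.2 _ (range_nonempty V) (directedOn_range.2 hV.directed_le) hK_sup
    exact ⟨t, by simpa [V, nhdsOpens] using ht⟩
  · refine ⟨⟨⟨⊤, subset_univ K⟩, fun u hu v huv => Subset.trans hu huv,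
      fun u hu v hv => ⟨u ⊓ v, subset_inter hu hv, inf_le_left, inf_le_right⟩⟩, ?_⟩
    intro D hD hdir hKD
    have : Nonempty D := hD.to_subtype
    rw [nhdsOpens, mem_ofPred_eq, Opens.coe_sSup, biUnion_eq_iUnion] at hKD
    obtain ⟨⟨d, hd⟩, hKd⟩ := hK.elim_directed_cover _ (fun d : D => d.1.2) hKD
      ((directedOn_iff_directed.1 hdir).mono_comp _ fun _ _ => id)
    exact ⟨d, hd, hKd⟩

lemma isIrreducible_compl_of_maximal_notMem {F : Set (Opens X)} (hF : IsLatFilter F)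
    {m : Opens X} (hmF : m ∉ F) (hmax : ∀ v, m < v → v ∈ F) : IsIrreducible (m : Set X)ᶜ := by
  have hsup : ∀ u : Opens X, ¬u ≤ m → m ⊔ u ∈ F := fun u hu => hmax _ (left_lt_sup.2 hu)
  refine ⟨nonempty_compl.2 fun hm => hmF ?_, fun u v hu hv ⟨a, ham, hau⟩ ⟨b, hbm, hbv⟩ => ?_⟩
  · rw [show m = ⊤ from SetLike.coe_injective hm]
    exact hF.top_mem
  · by_contra huv
    have hle : (⟨u, hu⟩ ⊓ ⟨v, hv⟩ : Opens X) ≤ m := fun x hx =>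
      by_contra fun hxm => huv ⟨x, hxm, hx⟩
    refine hmF (sup_eq_left.2 hle ▸ ?_)
    rw [sup_inf_left]
    exact hF.inf_mem (hsup _ fun h => ham (h hau)) (hsup _ fun h => hbm (h hbv))

/-- Hofmann–Mislove: the generic point of the complement of an open maximal outside `F` lies in
every member of `F`. -/
lemma ScottOpenFilter.mem_of_kerOpens_subset (hsob : Sober X) {F : Set (Opens X)}
    (hF : ScottOpenFilter F) {U : Opens X} (hU : kerOpens F ⊆ U) : U ∈ F := by
  by_contra hUF
  obtain ⟨m, hUm, hmF, hmax⟩ := hF.exists_maximal_notMem hUF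
  obtain ⟨x, hx, -⟩ :=
    hsob _ m.2.isClosed_compl (isIrreducible_compl_of_maximal_notMem hF.1 hmF hmax)
  have hxm : x ∉ m := (hx ▸ subset_closure rfl : x ∈ (m : Set X)ᶜ)
  have hxF : x ∈ kerOpens F := mem_iInter₂.2 fun W hW => by_contra fun hxW =>
    hmF <| hF.1.2.1 W hW m fun z hzW => by_contra fun hzm =>
      hxW <| (specializes_iff_mem_closure.2 (hx ▸ hzm : z ∈ closure {x})).mem_open W.2 hzW
  exact hxm (hUm (hU hxF))

lemma ScottOpenFilter.eq_nhdsOpens_kerOpens (hsob : Sober X) {F : Set (Opens X)}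
    (hF : ScottOpenFilter F) : F = nhdsOpens (kerOpens F) :=
  Subset.antisymm (fun _ hU => biInter_subset_of_mem hU) fun _ hU =>
    hF.mem_of_kerOpens_subset hsob hU

lemma ScottOpenFilter.isCompact_kerOpens (hsob : Sober X) {F : Set (Opens X)}
    (hF : ScottOpenFilter F) : IsCompact (kerOpens F) :=
  scottOpenFilter_nhdsOpens_iff.1 (hF.eq_nhdsOpens_kerOpens hsob ▸ hF)

lemma WeaklyHausdorff.exists_isOpen_inter_subset (hwh : WeaklyHausdorff X) {Q₁ Q₂ W : Set X}
    (h₁ : IsCompact Q₁) (hs₁ : IsSaturated Q₁) (h₂ : IsCompact Q₂) (hs₂ : IsSaturated Q₂)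
    (hW : IsOpen W) (hQW : Q₁ ∩ Q₂ ⊆ W) :
    ∃ U V, IsOpen U ∧ IsOpen V ∧ Q₁ ⊆ U ∧ Q₂ ⊆ V ∧ U ∩ V ⊆ W := by
  have hloc : ∀ p ∈ Q₁ ×ˢ Q₂, ∀ᶠ q in 𝓝 p, q.1 = q.2 → q.1 ∈ W := by
    rintro ⟨x, y⟩ ⟨hx, hy⟩
    obtain ⟨U, V, hU, hxU, hV, hyV, hUV⟩ := hwh x y W hW fun z hz =>
      hQW ⟨hs₁.upSet_subset hx hz.1, hs₂.upSet_subset hy hz.2⟩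
    filter_upwards [prod_mem_nhds (hU.mem_nhds hxU) (hV.mem_nhds hyV)] with q hq hq12
    exact hUV ⟨hq.1, hq12 ▸ hq.2⟩
  rw [← eventually_nhdsSet_iff_forall, h₁.nhdsSet_prod_eq h₂,
    ((hasBasis_nhdsSet _).prod (hasBasis_nhdsSet _)).eventually_iff] at hloc
  obtain ⟨⟨U, V⟩, ⟨⟨hU, hQU⟩, hV, hQV⟩, hUV⟩ := hloc
  exact ⟨U, V, hU, hV, hQU, hQV, fun z hz => hUV (mk_mem_prod hz.1 hz.2) rfl⟩

lemma WeaklyHausdorff.filterJoin_nhdsOpens (hwh : WeaklyHausdorff X) {Q₁ Q₂ : Set X}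
    (h₁ : IsCompact Q₁) (hs₁ : IsSaturated Q₁) (h₂ : IsCompact Q₂) (hs₂ : IsSaturated Q₂) :
    FilterJoin (nhdsOpens Q₁) (nhdsOpens Q₂) = nhdsOpens (Q₁ ∩ Q₂) := by
  ext W
  refine ⟨?_, fun hW => ?_⟩
  · rintro ⟨u, hu, v, hv, rfl⟩
    exact inter_subset_inter hu hv
  · obtain ⟨U, V, hU, hV, hQU, hQV, hUV⟩ := hwh.exists_isOpen_inter_subset h₁ hs₁ h₂ hs₂ W.2 hW
    refine ⟨⟨U, hU⟩ ⊔ W, hQU.trans subset_union_left, ⟨V, hV⟩ ⊔ W,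
      hQV.trans subset_union_left, ?_⟩
    rw [← sup_inf_right]
    exact (sup_eq_right.2 (show (⟨U, hU⟩ ⊓ ⟨V, hV⟩ : Opens X) ≤ W from hUV)).symm

lemma kerOpens_filterJoin_nhdsOpens (K₁ K₂ : Set X) :
    kerOpens (FilterJoin (nhdsOpens K₁) (nhdsOpens K₂)) = nhdsKer K₁ ∩ nhdsKer K₂ := by
  rw [kerOpens_filterJoin (subset_univ K₁) (subset_univ K₂), kerOpens_nhdsOpens,
    kerOpens_nhdsOpens]

lemma weaklyHausdorff_of_locallyTemperate (hsob : Sober X)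
    (hLT : LocallyTemperate (Opens X)) : WeaklyHausdorff X := by
  intro x y W hW hxyW
  have hH := hLT _ _ (scottOpenFilter_nhdsOpens_iff.2 (isCompact_singleton (x := x)))
    (scottOpenFilter_nhdsOpens_iff.2 (isCompact_singleton (x := y)))
  rw [upSet_eq_nhdsKer_singleton, upSet_eq_nhdsKer_singleton,
    ← kerOpens_filterJoin_nhdsOpens] at hxyW
  obtain ⟨u, hu, v, hv, huv⟩ := hH.mem_of_kerOpens_subset hsob (U := ⟨W, hW⟩) hxyW
  exact ⟨u, v, u.2, singleton_subset_iff.1 hu, v.2, singleton_subset_iff.1 hv,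
    (congrArg SetLike.coe huv).ge⟩

lemma coherent_of_locallyTemperate (hsob : Sober X) (hLT : LocallyTemperate (Opens X)) :
    Coherent X := by
  intro Q₁ Q₂ h₁ hs₁ h₂ hs₂
  have hH := hLT _ _ (scottOpenFilter_nhdsOpens_iff.2 h₁) (scottOpenFilter_nhdsOpens_iff.2 h₂)
  have hQ := hH.isCompact_kerOpens hsob
  rwa [kerOpens_filterJoin_nhdsOpens, isSaturated_iff_nhdsKer_eq.1 hs₁,
    isSaturated_iff_nhdsKer_eq.1 hs₂] at hQ

lemma locallyTemperate_of_weaklyHausdorff_coherent (hsob : Sober X) (hwh : WeaklyHausdorff X)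
    (hcoh : Coherent X) : LocallyTemperate (Opens X) := by
  intro F G hF hG
  have h₁ := hF.isCompact_kerOpens hsob
  have h₂ := hG.isCompact_kerOpens hsob
  have hs₁ := isSaturated_kerOpens F
  have hs₂ := isSaturated_kerOpens G
  rw [hF.eq_nhdsOpens_kerOpens hsob, hG.eq_nhdsOpens_kerOpens hsob,
    hwh.filterJoin_nhdsOpens h₁ hs₁ h₂ hs₂]
  exact scottOpenFilter_nhdsOpens_iff.2 (hcoh _ _ h₁ hs₁ h₂ hs₂)

end Topological

theorem opens_locallyTemperate_iff_weaklyHausdorff_coherent (X : Type*) [TopologicalSpace X]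
    (hsob : Sober X) :
    LocallyTemperate (TopologicalSpace.Opens X) ↔ (WeaklyHausdorff X ∧ Coherent X) :=
  ⟨fun hLT => ⟨weaklyHausdorff_of_locallyTemperate hsob hLT,
      coherent_of_locallyTemperate hsob hLT⟩,
    fun ⟨hwh, hcoh⟩ => locallyTemperate_of_weaklyHausdorff_coherent hsob hwh hcoh⟩
end

section
/- In a complete Boolean algebra, the join F ∨ G of any two Scott-open filters F and G is a Scott-open filter; that is, every complete Boolean algebra is locally temperate. -/
theorem completeBooleanAlgebra_locallyTemperate (L : Type*) [CompleteBooleanAlgebra L] :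
    LocallyTemperate L := by
  intro F G hF hG
  obtain ⟨⟨⟨uF, huF⟩, hFup, hFdir⟩, hFscott⟩ := hF
  obtain ⟨⟨⟨uG, huG⟩, hGup, hGdir⟩, hGscott⟩ := hG
  -- upward closedness of the join
  have hJup : ∀ w ∈ FilterJoin F G, ∀ z : L, w ≤ z → z ∈ FilterJoin F G := by
    rintro w ⟨u, hu, v, hv, rfl⟩ z hz
    refine ⟨u ⊔ z, hFup u hu _ le_sup_left, v ⊔ z, hGup v hv _ le_sup_left, ?_⟩
    have h1 : (u ⊔ z) ⊓ (v ⊔ z) = (u ⊓ v) ⊔ z := (sup_inf_right u v z).symm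
    rw [h1, sup_eq_right.mpr hz]
  refine ⟨⟨⟨uF ⊓ uG, uF, huF, uG, huG, rfl⟩, hJup, ?_⟩, ?_⟩
  · rintro _ ⟨u1, hu1, v1, hv1, rfl⟩ _ ⟨u2, hu2, v2, hv2, rfl⟩
    obtain ⟨u, hu, hu1', hu2'⟩ := hFdir u1 hu1 u2 hu2
    obtain ⟨v, hv, hv1', hv2'⟩ := hGdir v1 hv1 v2 hv2
    exact ⟨u ⊓ v, ⟨u, hu, v, hv, rfl⟩, inf_le_inf hu1' hv1', inf_le_inf hu2' hv2'⟩
  · intro D hDne hDdir hsup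
    obtain ⟨u, hu, v, hv, heq⟩ := hsup
    -- image of D under (· ⊔ vᶜ)
    set E : Set L := (fun d => d ⊔ vᶜ) '' D with hE
    have hEne : E.Nonempty := hDne.image _
    have hEdir : DirectedOn (· ≤ ·) E := by
      rintro _ ⟨a, ha, rfl⟩ _ ⟨b, hb, rfl⟩
      obtain ⟨c, hc, hac, hbc⟩ := hDdir a ha b hb
      exact ⟨c ⊔ vᶜ, ⟨c, hc, rfl⟩, sup_le_sup_right hac _, sup_le_sup_right hbc _⟩
    have hsSupE : sSup E = sSup D ⊔ vᶜ := by
      apply le_antisymm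
      · apply sSup_le
        rintro _ ⟨a, ha, rfl⟩
        exact sup_le_sup_right (le_sSup ha) _
      · obtain ⟨d0, hd0⟩ := hDne
        apply sup_le
        · apply sSup_le
          intro a ha
          exact le_trans le_sup_left (le_sSup ⟨a, ha, rfl⟩)
        · exact le_trans le_sup_right (le_sSup ⟨d0, hd0, rfl⟩)
    have huE : u ≤ sSup E := by
      rw [hsSupE, heq]
      have : u ⊓ v ≤ u ⊓ v := le_rfl
      calc u = u ⊓ (v ⊔ vᶜ) := by rw [sup_compl_eq_top, inf_top_eq]
        _ = u ⊓ v ⊔ u ⊓ vᶜ := inf_sup_left u v vᶜ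
        _ ≤ u ⊓ v ⊔ vᶜ := sup_le_sup_left inf_le_right _
    have hmem : sSup E ∈ F := hFup u hu _ huE
    obtain ⟨_, ⟨d, hd, rfl⟩, hdF⟩ := hFscott E hEne hEdir hmem
    refine ⟨d, hd, ?_⟩
    have hle : (d ⊔ vᶜ) ⊓ v ≤ d := by
      have h2 : (d ⊔ vᶜ) ⊓ v = d ⊓ v ⊔ vᶜ ⊓ v := inf_sup_right d vᶜ v
      rw [h2, compl_inf_eq_bot, sup_bot_eq]
      exact inf_le_left
    exact hJup _ ⟨d ⊔ vᶜ, hdF, v, hv, rfl⟩ d hle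
end

section
/- A continuous frame L is stable if and only if it is locally temperate. -/
section CFSLTHelpers

variable {L : Type*} [CompleteLattice L]

theorem wbL_le {u v : L} (h : WayBelowL u v) : u ≤ v := by
  obtain ⟨d, hd, hud⟩ := h {v} ⟨v, rfl⟩
    (fun a ha b hb => ⟨v, rfl, by simp_all, by simp_all⟩) (by simp)
  simp only [Set.mem_singleton_iff] at hd
  exact hd ▸ hud

theorem wbL_mono {u' u v v' : L} (hu : u' ≤ u) (h : WayBelowL u v) (hv : v ≤ v') :
    WayBelowL u' v' := fun D hne hdir hle =>
  (h D hne hdir (hv.trans hle)).imp fun d hd => ⟨hd.1, hu.trans hd.2⟩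

theorem wbL_interp (hcont : ContinuousLat L) {u v : L} (h : WayBelowL u v) :
    ∃ y : L, WayBelowL u y ∧ WayBelowL y v := by
  set S : Set L := {a | ∃ b, WayBelowL a b ∧ WayBelowL b v} with hS
  obtain ⟨D₀, hD₀ne, hD₀dir, hD₀wb, hD₀sup⟩ := hcont v
  obtain ⟨x₀, hx₀⟩ := hD₀ne
  obtain ⟨Dx, hDxne, _, hDxwb, _⟩ := hcont x₀
  obtain ⟨a₀, ha₀⟩ := hDxne
  have hSne : S.Nonempty := ⟨a₀, x₀, hDxwb a₀ ha₀, hD₀wb x₀ hx₀⟩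
  have hSdir : DirectedOn (· ≤ ·) S := by
    rintro a ⟨b, hab, hbv⟩ a' ⟨b', hab', hb'v⟩
    obtain ⟨c, hc, hbc⟩ := hbv D₀ ⟨x₀, hx₀⟩ hD₀dir hD₀sup.le
    obtain ⟨c', hc', hb'c'⟩ := hb'v D₀ ⟨x₀, hx₀⟩ hD₀dir hD₀sup.le
    obtain ⟨c'', hc'', hcc, hc'c⟩ := hD₀dir c hc c' hc'
    obtain ⟨Dc, hDcne, hDcdir, hDcwb, hDcsup⟩ := hcont c''
    obtain ⟨e, he, hae⟩ := (wbL_mono le_rfl hab (hbc.trans hcc)) Dc hDcne hDcdir hDcsup.le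
    obtain ⟨e', he', ha'e'⟩ := (wbL_mono le_rfl hab' (hb'c'.trans hc'c)) Dc hDcne hDcdir hDcsup.le
    obtain ⟨e'', he'', hee, he'e⟩ := hDcdir e he e' he'
    exact ⟨e'', ⟨c'', hDcwb e'' he'', hD₀wb c'' hc''⟩, hae.trans hee, ha'e'.trans he'e⟩
  have hvle : v ≤ sSup S := by
    rw [hD₀sup]
    refine sSup_le fun x hx => ?_
    obtain ⟨Dx, hDxne, _, hDxwb, hDxsup⟩ := hcont x
    rw [hDxsup]
    exact sSup_le fun a ha => le_sSup ⟨x, hDxwb a ha, hD₀wb x hx⟩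
  obtain ⟨d, ⟨b, hdb, hbv⟩, hud⟩ := h S hSne hSdir hvle
  exact ⟨b, wbL_mono hud hdb le_rfl, hbv⟩

theorem exists_scottOpenFilter (hcont : ContinuousLat L) {u v : L} (h : WayBelowL u v) :
    ∃ F : Set L, ScottOpenFilter F ∧ v ∈ F ∧ ∀ z ∈ F, u ≤ z := by
  have step : ∀ p : {x : L // WayBelowL u x}, ∃ y : L, WayBelowL u y ∧ WayBelowL y p.1 :=
    fun p => wbL_interp hcont p.2
  choose nxt h1 h2 using step
  obtain ⟨y0, hy0u, hy0v⟩ := wbL_interp hcont h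
  let g : ℕ → {x : L // WayBelowL u x} :=
    fun n => Nat.rec ⟨y0, hy0u⟩ (fun _ p => ⟨nxt p, h1 p⟩) n
  set x : ℕ → L := fun n => (g n).1 with hxdef
  have hstep : ∀ n, WayBelowL (x (n + 1)) (x n) := fun n => h2 (g n)
  have hux : ∀ n, u ≤ x n := fun n => wbL_le (g n).2
  have hxle : ∀ n, x (n + 1) ≤ x n := fun n => wbL_le (hstep n)
  have hadd : ∀ n k, x (n + k) ≤ x n := by
    intro n k
    induction k with
    | zero => exact le_rfl
    | succ m ih => exact (hxle (n + m)).trans ih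
  have hanti : ∀ m n, m ≤ n → x n ≤ x m := by
    intro m n hmn
    obtain ⟨k, rfl⟩ := Nat.exists_eq_add_of_le hmn
    exact hadd m k
  refine ⟨{z | ∃ n, WayBelowL (x n) z}, ⟨⟨⟨v, 0, hy0v⟩, ?_, ?_⟩, ?_⟩, ⟨0, hy0v⟩, ?_⟩
  · rintro z ⟨n, hn⟩ z' hzz'
    exact ⟨n, wbL_mono le_rfl hn hzz'⟩
  · rintro z ⟨m, hm⟩ z' ⟨n, hn⟩
    refine ⟨x (max m n), ⟨max m n + 1, hstep _⟩, ?_, ?_⟩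
    · exact (hanti m _ (le_max_left m n)).trans (wbL_le hm)
    · exact (hanti n _ (le_max_right m n)).trans (wbL_le hn)
  · rintro D hne hdir ⟨n, hn⟩
    obtain ⟨d, hd, hnd⟩ := hn D hne hdir le_rfl
    exact ⟨d, hd, n + 1, wbL_mono le_rfl (hstep n) hnd⟩
  · rintro z ⟨n, hn⟩
    exact (hux n).trans (wbL_le hn)

end CFSLTHelpers

theorem continuous_frame_stable_iff_locallyTemperate (L : Type*) [Order.Frame L]
    (hcont : ContinuousLat L) : StableLat L ↔ LocallyTemperate L := by
  constructor
  · -- stable → locally temperate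
    intro hst F G hF hG
    obtain ⟨⟨⟨a₀, ha₀⟩, hFup, hFdir⟩, hFsc⟩ := hF
    obtain ⟨⟨⟨b₀, hb₀⟩, hGup, hGdir⟩, hGsc⟩ := hG
    have hJup : ∀ w ∈ FilterJoin F G, ∀ z : L, w ≤ z → z ∈ FilterJoin F G := by
      rintro w ⟨a, haF, b, hbG, rfl⟩ z hz
      refine ⟨a ⊔ z, hFup a haF _ le_sup_left, b ⊔ z, hGup b hbG _ le_sup_left, ?_⟩
      rw [← sup_inf_right, sup_eq_right.mpr hz]
    refine ⟨⟨⟨a₀ ⊓ b₀, a₀, ha₀, b₀, hb₀, rfl⟩, hJup, ?_⟩, ?_⟩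
    · rintro w ⟨a, haF, b, hbG, rfl⟩ w' ⟨a', ha'F, b', hb'G, rfl⟩
      obtain ⟨c, hcF, hca, hca'⟩ := hFdir a haF a' ha'F
      obtain ⟨d, hdG, hdb, hdb'⟩ := hGdir b hbG b' hb'G
      exact ⟨c ⊓ d, ⟨c, hcF, d, hdG, rfl⟩, inf_le_inf hca hdb, inf_le_inf hca' hdb'⟩
    · rintro D hne hdir hmem
      obtain ⟨a, haF, b, hbG, heq⟩ := hmem
      obtain ⟨Da, hDane, hDadir, hDawb, hDasup⟩ := hcont a
      obtain ⟨a', ha'Da, ha'F⟩ := hFsc Da hDane hDadir (hDasup ▸ haF)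
      obtain ⟨Db, hDbne, hDbdir, hDbwb, hDbsup⟩ := hcont b
      obtain ⟨b', hb'Db, hb'G⟩ := hGsc Db hDbne hDbdir (hDbsup ▸ hbG)
      have hwb : WayBelowL (a' ⊓ b') (a ⊓ b) :=
        hst _ a b (wbL_mono inf_le_left (hDawb a' ha'Da) le_rfl)
          (wbL_mono inf_le_right (hDbwb b' hb'Db) le_rfl)
      obtain ⟨d, hd, hled⟩ := hwb D hne hdir heq.ge
      exact ⟨d, hd, hJup _ ⟨a', ha'F, b', hb'G, rfl⟩ d hled⟩
  · -- locally temperate → stable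
    intro hlt u v w huv huw
    obtain ⟨F, hF, hvF, hFu⟩ := exists_scottOpenFilter hcont huv
    obtain ⟨G, hG, hwG, hGu⟩ := exists_scottOpenFilter hcont huw
    have hJ := hlt F G hF hG
    intro D hne hdir hle
    have hmem : sSup D ∈ FilterJoin F G :=
      hJ.1.2.1 (v ⊓ w) ⟨v, hvF, w, hwG, rfl⟩ (sSup D) hle
    obtain ⟨d, hd, a, haF, b, hbG, heq⟩ := hJ.2 D hne hdir hmem
    exact ⟨d, hd, heq ▸ le_inf (hFu a haF) (hGu b hbG)⟩
end

section
/- Let X be a weakly Hausdorff topological space, Q a compact saturated subset of X, and C a closed subset of X. If C ⊆ cl(U ∩ C) for every open set U containing Q, then C ⊆ cl(Q ∩ C). -/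
theorem closure_compact_closed_inter {X : Type*} [TopologicalSpace X]
    (hwh : WeaklyHausdorff X) (Q C : Set X) (hQ : IsCompact Q) (hQsat : IsSaturated Q)
    (hC : IsClosed C) (h : ∀ U : Set X, IsOpen U → Q ⊆ U → C ⊆ closure (U ∩ C)) :
    C ⊆ closure (Q ∩ C) := by
  intro x hx
  rw [mem_closure_iff]
  intro W hW hxW
  by_contra hne
  rw [Set.not_nonempty_iff_eq_empty] at hne
  -- Q is upward closed
  have hup : ∀ q ∈ Q, UpSet q ⊆ Q := by
    intro q hq z hz
    rw [hQsat]
    intro U hU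
    exact hz U hU.1 (hU.2 hq)
  -- Q ∩ ↑x ⊆ Cᶜ
  have hsub : Q ∩ UpSet x ⊆ Cᶜ := by
    rintro q ⟨hqQ, hqx⟩ hqC
    have : q ∈ W ∩ (Q ∩ C) := ⟨hqx W hW hxW, hqQ, hqC⟩
    rw [hne] at this
    exact this
  -- for each q ∈ Q, weak Hausdorff gives opens separating q and x within Cᶜ
  have key : ∀ q ∈ Q, ∃ U V : Set X, IsOpen U ∧ q ∈ U ∧ IsOpen V ∧ x ∈ V ∧ U ∩ V ⊆ Cᶜ := by
    intro q hq
    exact hwh q x Cᶜ hC.isOpen_compl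
      (fun z hz => hsub ⟨hup q hq hz.1, hz.2⟩)
  choose! Uf Vf hUo hqU hVo hxV hUV using key
  -- cover Q by finitely many Uf q
  obtain ⟨t, htQ, hcov⟩ := hQ.elim_nhds_subcover Uf
    (fun q hq => (hUo q hq).mem_nhds (hqU q hq))
  set V : Set X := ⋂ q ∈ t, Vf q with hV
  have hVopen : IsOpen V := isOpen_biInter_finset (fun q hq => hVo q (htQ q hq))
  have hxVmem : x ∈ V := Set.mem_iInter₂.2 (fun q hq => hxV q (htQ q hq))
  set U : Set X := ⋃ q ∈ t, Uf q with hU'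
  have hUopen : IsOpen U := isOpen_biUnion (fun q hq => hUo q (htQ q hq))
  have hxcl : x ∈ closure (U ∩ C) := h U hUopen hcov hx
  rw [mem_closure_iff] at hxcl
  obtain ⟨z, hzV, hzU, hzC⟩ := hxcl V hVopen hxVmem
  obtain ⟨q, hqt, hzUq⟩ := Set.mem_iUnion₂.1 hzU
  exact hUV q (htQ q hqt) ⟨hzUq, Set.mem_iInter₂.1 hzV q hqt⟩ hzC
end

section
/- Let X be a topological space and L a lens in X. Then the pair (↑L, cl(L)) is a quasi-lens: ↑L is compact saturated, cl(L) is closed, ↑L intersects cl(L), ↑L ⊆ ↑(↑L ∩ cl(L)), and for every open set U containing ↑L one has cl(L) ⊆ cl(U ∩ cl(L)). -/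
theorem lens_to_quasiLens {X : Type*} [TopologicalSpace X] (L : Set X) (hL : IsLens L) :
    IsQuasiLens (UpClo L) (closure L) := by
  obtain ⟨hne, Q, C, hQ, hQsat, hC, rfl⟩ := hL
  have hsub : Q ∩ C ⊆ UpClo (Q ∩ C) := fun a ha => ⟨a, ha, fun U _ h => h⟩
  have hLcomp : IsCompact (Q ∩ C) := hQ.inter_right hC
  refine ⟨?_, ?_, isClosed_closure, ?_, ?_, ?_⟩
  · -- compactness of UpClo (Q ∩ C)
    refine isCompact_of_finite_subcover fun {ι} U hU hcov => ?_
    obtain ⟨t, ht⟩ := hLcomp.elim_finite_subcover U hU (hsub.trans hcov)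
    refine ⟨t, fun z hz => ?_⟩
    obtain ⟨a, ha, hle⟩ := hz
    obtain ⟨i, hit, hai⟩ := Set.mem_iUnion₂.mp (ht ha)
    exact Set.mem_iUnion₂.mpr ⟨i, hit, hle (U i) (hU i) hai⟩
  · -- saturated
    apply Set.Subset.antisymm
    · intro z hz
      exact Set.mem_sInter.mpr fun U hU => hU.2 hz
    · intro z hz
      by_contra hzn
      have hsubU : UpClo (Q ∩ C) ⊆ (closure {z})ᶜ := by
        intro a' ha' hmem
        obtain ⟨a, ha, hle⟩ := ha'
        refine hzn ⟨a, ha, fun U hUo haU => ?_⟩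
        obtain ⟨w, hw1, hw2⟩ := mem_closure_iff.mp hmem U hUo (hle U hUo haU)
        rwa [Set.mem_singleton_iff.mp hw2] at hw1
      have := Set.mem_sInter.mp hz _ ⟨isClosed_closure.isOpen_compl, hsubU⟩
      exact this (subset_closure rfl)
  · -- nonempty intersection
    obtain ⟨a, ha⟩ := hne
    exact ⟨a, hsub ha, subset_closure ha⟩
  · -- UpClo L ⊆ UpClo (UpClo L ∩ closure L)
    rintro z ⟨a, ha, hle⟩
    exact ⟨a, ⟨hsub ha, subset_closure ha⟩, hle⟩
  · -- closure condition
    intro U hUo hQU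
    exact closure_mono fun a ha => ⟨hQU (hsub ha), subset_closure ha⟩
end

section
/- Let X be a weakly Hausdorff topological space and (Q, C) a quasi-lens in X. Then ↑(Q ∩ C) = Q and cl(Q ∩ C) = C; that is, the maps L ↦ (↑L, cl(L)) and (Q, C) ↦ Q ∩ C are mutually inverse bijections between lenses and quasi-lenses of X. -/
theorem quasiLens_eq_of_weaklyHausdorff {X : Type*} [TopologicalSpace X]
    (hwh : WeaklyHausdorff X) (Q C : Set X) (h : IsQuasiLens Q C) :
    UpClo (Q ∩ C) = Q ∧ closure (Q ∩ C) = C := by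
  obtain ⟨hQc, hQs, hCc, hne, hQup, hC⟩ := h
  constructor
  · apply Set.Subset.antisymm
    · rintro z ⟨a, ⟨haQ, _⟩, hle⟩
      rw [hQs]
      rintro U ⟨hU, hQU⟩
      exact hle U hU (hQU haQ)
    · exact hQup
  · apply Set.Subset.antisymm
    · exact closure_minimal Set.inter_subset_right hCc
    · intro x hx
      by_contra hxcl
      have key : ∀ q ∈ Q, ∃ U V : Set X,
          IsOpen U ∧ q ∈ U ∧ IsOpen V ∧ x ∈ V ∧ U ∩ V ⊆ Cᶜ := by
        intro q hq
        apply hwh q x Cᶜ hCc.isOpen_compl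
        rintro z ⟨hzq, hzx⟩ hzC
        have hzQ : z ∈ Q := by
          rw [hQs]; rintro U ⟨hU, hQU⟩; exact hzq U hU (hQU hq)
        apply hxcl
        by_contra h'
        exact (hzx _ isClosed_closure.isOpen_compl h')
          (subset_closure ⟨hzQ, hzC⟩)
      choose! U V hUo hqU hVo hxV hUV using key
      obtain ⟨t, htQ, htfin, ht⟩ := hQc.elim_finite_subcover_image
        (fun q hq => hUo q hq) (fun z hz => Set.mem_biUnion hz (hqU z hz))
      have hUbig : IsOpen (⋃ q ∈ t, U q) :=
        isOpen_biUnion fun q hq => hUo q (htQ hq)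
      have hVbig : IsOpen (⋂ q ∈ t, V q) :=
        htfin.isOpen_biInter fun q hq => hVo q (htQ hq)
      have hxVbig : x ∈ ⋂ q ∈ t, V q :=
        Set.mem_biInter fun q hq => hxV q (htQ hq)
      have hxcl2 := hC (⋃ q ∈ t, U q) hUbig ht hx
      rw [mem_closure_iff] at hxcl2
      obtain ⟨y, hyV, hyU, hyC⟩ := hxcl2 _ hVbig hxVbig
      obtain ⟨q, hqt, hyUq⟩ := Set.mem_iUnion₂.mp hyU
      exact hUV q (htQ hqt) ⟨hyUq, Set.mem_iInter₂.mp hyV q hqt⟩ hyC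
end

section
/- For every lens L in a weakly Hausdorff topological space X, the downward closure ↓L of L in the specialization preorder is closed, and consequently cl(L) = ↓L. -/
theorem downClo_lens_closed {X : Type*} [TopologicalSpace X] (hwh : WeaklyHausdorff X)
    (L : Set X) (hL : IsLens L) : IsClosed (DownClo L) ∧ closure L = DownClo L := by
  obtain ⟨hne, Q, C, hQc, hQs, hCc, hLQC⟩ := hL
  have hQup : ∀ q ∈ Q, ∀ z, SpecLE q z → z ∈ Q := by
    intro q hq z hqz
    rw [hQs]
    rintro S ⟨hSo, hQS⟩
    exact hqz S hSo (hQS hq)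
  have hclosed : IsClosed (DownClo L) := by
    rw [← isOpen_compl_iff, isOpen_iff_forall_mem_open]
    intro x hx
    have hxL : ∀ a ∈ L, ¬ SpecLE x a := fun a ha h => hx ⟨a, ha, h⟩
    have key : ∀ y : X, y ∈ Q → ∃ U V : Set X, IsOpen U ∧ x ∈ U ∧ IsOpen V ∧ y ∈ V ∧
        U ∩ V ⊆ Cᶜ := by
      intro y hy
      apply hwh x y Cᶜ hCc.isOpen_compl
      rintro z ⟨hzx, hzy⟩ hzC
      exact hxL z (hLQC ▸ ⟨hQup y hy z hzy, hzC⟩) hzx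
    choose U V hUo hxU hVo hyV hUV using key
    obtain ⟨t, ht⟩ := hQc.elim_finite_subcover (fun y : Q => V y y.2) (fun y => hVo y y.2)
      (fun q hq => Set.mem_iUnion.2 ⟨⟨q, hq⟩, hyV q hq⟩)
    refine ⟨⋂ y ∈ t, U y y.2, ?_, isOpen_biInter_finset (fun y _ => hUo y y.2), ?_⟩
    · intro w hw
      rintro ⟨a, ha, hwa⟩
      have haQ : a ∈ Q := (hLQC ▸ ha).1
      have haC : a ∈ C := (hLQC ▸ ha).2
      obtain ⟨y, hy⟩ := Set.mem_iUnion.1 (ht haQ)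
      obtain ⟨yt, hyV'⟩ := Set.mem_iUnion.1 hy
      have haU : a ∈ U y y.2 := hwa _ (hUo y y.2) (Set.mem_iInter₂.1 hw y yt)
      exact hUV y y.2 ⟨haU, hyV'⟩ haC
    · exact Set.mem_iInter₂.2 fun y _ => hxU y y.2
  refine ⟨hclosed, ?_⟩
  apply subset_antisymm
  · exact closure_minimal (fun a ha => ⟨a, ha, fun U _ h => h⟩) hclosed
  · rintro z ⟨a, ha, hza⟩
    rw [mem_closure_iff]
    exact fun o ho hz => ⟨a, hza o ho hz, ha⟩
end

section
/- The one-point compactification of the rational numbers ℚ (with its usual topology) is a sober topological space: every irreducible closed subset is the closure of a unique point. -/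
theorem onePoint_rat_sober : Sober (OnePoint ℚ) := by
  intro C hCclosed hCirr
  obtain ⟨hne, hpre⟩ := hCirr
  -- no two distinct rational points in C
  have key : ∀ p q : ℚ, (↑p : OnePoint ℚ) ∈ C → (↑q : OnePoint ℚ) ∈ C → p = q := by
    intro p q hp hq
    by_contra hpq
    obtain ⟨U, V, hU, hV, hpU, hqV, hUV⟩ := t2_separation hpq
    have h1 : (C ∩ ((↑) '' U : Set (OnePoint ℚ))).Nonempty := ⟨↑p, hp, ⟨p, hpU, rfl⟩⟩
    have h2 : (C ∩ ((↑) '' V : Set (OnePoint ℚ))).Nonempty := ⟨↑q, hq, ⟨q, hqV, rfl⟩⟩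
    obtain ⟨z, _, ⟨a, haU, ha⟩, ⟨b, hbV, hb⟩⟩ :=
      hpre _ _ (OnePoint.isOpen_image_coe.2 hU) (OnePoint.isOpen_image_coe.2 hV) h1 h2
    have hab : a = b := OnePoint.coe_injective (ha.trans hb.symm)
    exact Set.disjoint_left.1 hUV haU (hab ▸ hbV)
  -- C is a subsingleton
  have hsub : C.Subsingleton := by
    intro a ha b hb
    by_contra hab
    -- helper: if ∞ ∈ C and ↑p ∈ C for some p, contradiction
    have infty_case : ∀ p : ℚ, OnePoint.infty ∈ C → (↑p : OnePoint ℚ) ∈ C → False := by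
      intro p hinf hp
      have hVo : IsOpen ({(↑p : OnePoint ℚ)}ᶜ) := isOpen_compl_singleton
      have h1 : (C ∩ Set.range ((↑) : ℚ → OnePoint ℚ)).Nonempty := ⟨↑p, hp, ⟨p, rfl⟩⟩
      have h2 : (C ∩ {(↑p : OnePoint ℚ)}ᶜ).Nonempty :=
        ⟨OnePoint.infty, hinf, fun h => (OnePoint.infty_ne_coe p) h⟩
      obtain ⟨z, hzC, ⟨q, hq⟩, hz2⟩ :=
        hpre _ _ OnePoint.isOpen_range_coe hVo h1 h2
      have : q = p := key q p (hq ▸ hzC) hp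
      exact hz2 (by rw [← hq, this]; rfl)
    induction a using OnePoint.rec with
    | infty =>
      induction b using OnePoint.rec with
      | infty => exact hab rfl
      | coe p => exact infty_case p ha hb
    | coe p =>
      induction b using OnePoint.rec with
      | infty => exact infty_case p hb ha
      | coe q => exact hab (congrArg _ (key p q ha hb))
  obtain ⟨x, hx⟩ := hne
  have hCx : C = {x} := hsub.eq_singleton_of_mem hx
  refine ⟨x, ?_, ?_⟩
  · show C = closure {x}
    rw [hCx, closure_singleton]
  intro y hy
  have hy' : C = closure {y} := hy
  have : C = {y} := by rw [hy', closure_singleton]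
  have := hCx.symm.trans this
  exact (Set.singleton_eq_singleton_iff.1 this).symm
end
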